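/- arXiv:2512.23308 — 2 statements merged into one kernel-verified Lean document; each statement's English description precedes it below -/
import Mathlib

section
/- Let S_1, …, S_{n+1} be exchangeable real-valued random variables with almost surely no ties, and let α ∈ (0,1). Define the conformal p-value P = (#{i ≤ n+1 : S_i ≥ S_{n+1}})/(n+1). Then Pr(P ≤ α) ≤ α; equivalently Pr(P > α) ≥ 1 − α. -/
open MeasureTheory Finset
open scoped ENNReal

/-!
At most `k` indices can have rank `≤ k`: the one among them with the smallest score already has
all of them among the indices scoring at least as high. Hence, pointwise, at most `α (n + 1)`
p-values are `≤ α`, so the probabilities `Pr(P_j ≤ α)` sum to at most `α (n + 1)`. By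
exchangeability they are all equal to that of the last index, which is therefore at most `α`.
-/

namespace MeasureTheory

variable {Ω ι : Type*} [MeasurableSpace Ω]

open Classical in
theorem sum_measure_le_of_card_mem_le [Fintype ι] (μ : Measure Ω) {A : ι → Set Ω}
    (hA : ∀ i, MeasurableSet (A i)) {c : ℝ≥0∞} (hc : ∀ ω, (#{i | ω ∈ A i} : ℝ≥0∞) ≤ c) :
    ∑ i, μ (A i) ≤ c * μ Set.univ := by
  calc ∑ i, μ (A i) = ∫⁻ ω, ∑ i, (A i).indicator 1 ω ∂μ := by
        rw [lintegral_finsetSum _ fun i _ => measurable_one.indicator (hA i)]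
        simp only [lintegral_indicator_one (hA _)]
    _ ≤ ∫⁻ _, c ∂μ := lintegral_mono fun ω => by
        simpa [Set.indicator_apply, sum_boole] using hc ω
    _ = c * μ Set.univ := lintegral_const c

end MeasureTheory

namespace ProbabilityTheory

variable {Ω ι : Type*} [MeasurableSpace Ω]

def Exchangeable (μ : Measure Ω) (X : Ω → ι → ℝ) : Prop :=
  ∀ π : Equiv.Perm ι, μ.map (fun ω => X ω ∘ π) = μ.map X

theorem Exchangeable.measure_comp_perm_mem {μ : Measure Ω} {X : Ω → ι → ℝ}
    (hexch : Exchangeable μ X) (hX : Measurable X) (π : Equiv.Perm ι)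
    {A : Set (ι → ℝ)} (hA : MeasurableSet A) :
    μ {ω | X ω ∘ π ∈ A} = μ {ω | X ω ∈ A} := by
  have hXπ : Measurable fun ω => X ω ∘ π :=
    measurable_pi_lambda _ fun i => (measurable_pi_apply (π i)).comp hX
  calc μ {ω | X ω ∘ π ∈ A} = μ.map (fun ω => X ω ∘ π) A := (Measure.map_apply hXπ hA).symm
    _ = μ {ω | X ω ∈ A} := by rw [hexch π, Measure.map_apply hX hA]; rfl

end ProbabilityTheory

namespace Conformal

open ProbabilityTheory

variable {ι : Type*} [Fintype ι]

noncomputable def rank (s : ι → ℝ) (j : ι) : ℕ := #{i | s j ≤ s i}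

noncomputable def pValue (s : ι → ℝ) (j : ι) : ℝ := rank s j / Fintype.card ι

theorem rank_comp_perm (s : ι → ℝ) (π : Equiv.Perm ι) (j : ι) :
    rank (s ∘ π) j = rank s (π j) :=
  card_equiv π (by simp)

theorem pValue_comp_perm (s : ι → ℝ) (π : Equiv.Perm ι) (j : ι) :
    pValue (s ∘ π) j = pValue s (π j) := by
  rw [pValue, pValue, rank_comp_perm]

theorem card_rank_le_le (s : ι → ℝ) (k : ℕ) : #{j | rank s j ≤ k} ≤ k := by
  obtain hJ | ⟨j₀, hj₀, hmin⟩ := (univ.filter fun j => rank s j ≤ k).eq_empty_or_nonempty.imp_right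
    (exists_min_image _ s)
  · simp [hJ]
  · calc #{j | rank s j ≤ k} ≤ rank s j₀ :=
          card_le_card fun j hj => by simpa using hmin j hj
      _ ≤ k := (mem_filter.1 hj₀).2

theorem card_pValue_le_le (s : ι → ℝ) {α : ℝ} (hα : 0 ≤ α) :
    (#{j | pValue s j ≤ α} : ℝ) ≤ α * Fintype.card ι := by
  rcases isEmpty_or_nonempty ι with hι | hι
  · simp
  have hcard : (0 : ℝ) < Fintype.card ι := by exact_mod_cast Fintype.card_pos
  have hfloor : ∀ j, pValue s j ≤ α ↔ rank s j ≤ ⌊α * Fintype.card ι⌋₊ := fun j => by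
    rw [pValue, div_le_iff₀ hcard, Nat.le_floor_iff (by positivity)]
  simp only [hfloor]
  exact (Nat.cast_le.2 (card_rank_le_le s _)).trans (Nat.floor_le (by positivity))

theorem measurable_rank (j : ι) : Measurable fun s : ι → ℝ => rank s j := by
  simp only [rank, card_filter]
  exact Finset.measurable_sum _ fun i _ =>
    Measurable.ite (measurableSet_le (measurable_pi_apply j) (measurable_pi_apply i))
      measurable_const measurable_const

theorem measurable_pValue (j : ι) : Measurable fun s : ι → ℝ => pValue s j :=
  (measurable_from_top.comp (measurable_rank j)).div_const _

theorem measure_pValue_le_le {Ω : Type*} [MeasurableSpace Ω] {μ : Measure Ω}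
    [IsProbabilityMeasure μ] {X : Ω → ι → ℝ} (hexch : Exchangeable μ X)
    (hX : Measurable X) (j : ι) {α : ℝ} (hα : 0 ≤ α) :
    μ {ω | pValue (X ω) j ≤ α} ≤ ENNReal.ofReal α := by
  classical
  set A : ι → Set Ω := fun i => {ω | pValue (X ω) i ≤ α}
  have hA : ∀ i, MeasurableSet (A i) := fun i =>
    measurableSet_le ((measurable_pValue i).comp hX) measurable_const
  have hAj : ∀ i, μ (A i) = μ (A j) := fun i => by
    have hAi : A i = {ω | X ω ∘ Equiv.swap j i ∈ {s | pValue s j ≤ α}} := by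
      ext ω
      simp [A, pValue_comp_perm]
    rw [hAi, hexch.measure_comp_perm_mem hX _ (measurableSet_le (measurable_pValue j) measurable_const)]
    rfl
  have hsum : (Fintype.card ι : ℝ≥0∞) * μ (A j) ≤ Fintype.card ι * ENNReal.ofReal α :=
    calc (Fintype.card ι : ℝ≥0∞) * μ (A j) = ∑ i, μ (A i) := by simp [hAj]
      _ ≤ ENNReal.ofReal (α * Fintype.card ι) * μ Set.univ :=
          sum_measure_le_of_card_mem_le μ hA fun ω => by
            rw [← ENNReal.ofReal_natCast]
            exact ENNReal.ofReal_le_ofReal (by simpa [A] using card_pValue_le_le (X ω) hα)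
      _ = Fintype.card ι * ENNReal.ofReal α := by
          rw [measure_univ, mul_one, ENNReal.ofReal_mul hα, ENNReal.ofReal_natCast, mul_comm]
  have : Nonempty ι := ⟨j⟩
  exact (ENNReal.mul_le_mul_iff_right (by simp) (by simp)).1 hsum

end Conformal

open Conformal

theorem conformal_pvalue_valid_general {Ω : Type*} [MeasurableSpace Ω]
    (P : Measure Ω) [IsProbabilityMeasure P] (n : ℕ)
    (S : Fin (n + 1) → Ω → ℝ) (hS : ∀ i, Measurable (S i))
    (hexch : ∀ π : Equiv.Perm (Fin (n + 1)),
      Measure.map (fun ω i => S (π i) ω) P = Measure.map (fun ω i => S i ω) P)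
    (α : ℝ) (hα : α ∈ Set.Ioo (0 : ℝ) 1) :
    P {ω | ((Finset.univ.filter
          (fun i : Fin (n + 1) => S (Fin.last n) ω ≤ S i ω)).card : ℝ) / (n + 1) ≤ α}
        ≤ ENNReal.ofReal α ∧
      ENNReal.ofReal (1 - α)
        ≤ P {ω | α < ((Finset.univ.filter
            (fun i : Fin (n + 1) => S (Fin.last n) ω ≤ S i ω)).card : ℝ) / (n + 1)} := by
  have hpValue : ∀ ω, ((Finset.univ.filter
      (fun i : Fin (n + 1) => S (Fin.last n) ω ≤ S i ω)).card : ℝ) / (n + 1)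
      = pValue (fun i => S i ω) (Fin.last n) := fun ω => by
    simp [pValue, rank]
  simp only [hpValue, ← not_le]
  have hX : Measurable fun ω i => S i ω := measurable_pi_lambda _ hS
  have hle := measure_pValue_le_le (X := fun ω i => S i ω) hexch hX (Fin.last n) hα.1.le
  have hmeas : MeasurableSet {ω | pValue (fun i => S i ω) (Fin.last n) ≤ α} :=
    measurableSet_le ((measurable_pValue _).comp hX) measurable_const
  refine ⟨hle, ?_⟩
  rw [← Set.compl_ofPred, prob_compl_eq_one_sub hmeas, ENNReal.ofReal_sub _ hα.1.le,
    ENNReal.ofReal_one]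
  exact tsub_le_tsub_left hle 1

/-- Finite-sample validity of the conformal p-value: for exchangeable, a.s. tie-free
scores `S_1, …, S_{n+1}`, the p-value `P = #{i : S_i ≥ S_{n+1}}/(n+1)` satisfies
`Pr(P ≤ α) ≤ α`, equivalently `Pr(P > α) ≥ 1 - α`. -/
theorem conformal_pvalue_valid {Ω : Type*} [MeasurableSpace Ω]
    (P : Measure Ω) [IsProbabilityMeasure P] (n : ℕ)
    (S : Fin (n + 1) → Ω → ℝ) (hS : ∀ i, Measurable (S i))
    (hexch : ∀ π : Equiv.Perm (Fin (n + 1)),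
      Measure.map (fun ω i => S (π i) ω) P = Measure.map (fun ω i => S i ω) P)
    (hties : ∀ i j, i ≠ j → P {ω | S i ω = S j ω} = 0)
    (α : ℝ) (hα : α ∈ Set.Ioo (0 : ℝ) 1) :
    P {ω | ((Finset.univ.filter
          (fun i : Fin (n + 1) => S (Fin.last n) ω ≤ S i ω)).card : ℝ) / (n + 1) ≤ α}
        ≤ ENNReal.ofReal α ∧
      ENNReal.ofReal (1 - α)
        ≤ P {ω | α < ((Finset.univ.filter
            (fun i : Fin (n + 1) => S (Fin.last n) ω ≤ S i ω)).card : ℝ) / (n + 1)} :=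
  conformal_pvalue_valid_general P n S hS hexch α hα
end

section
/- Let σ : [0,1] → ℝ be given by σ(x) = 1 + x and let Z be a standard normal random variable. For a Borel probability measure P on [0,1], define F_P(r) = ∫ Φ(r/σ(x)) dP(x) for r > 0, where Φ is the standard normal CDF. If P_1 and P_2 are two distinct Borel probability measures on [0,1], and F_{P_1}(r) = F_{P_2}(r) for all r > 0, then P_1 = P_2. Consequently, if P_1 ≠ P_2 then there exists r > 0 with F_{P_1}(r) ≠ F_{P_2}(r). -/
/-!
Write `Φ̄ = 1 - Φ` for the standard normal tail. Since `Φ̄` decays like a Gaussian, the Mellin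
transform of the mixture tail can be computed by Fubini and the substitution `r = σ u`:
`∫_{r>0} r^k (1 - F_P(r)) dr = c_k ∫ σ(x)^(k+1) dP(x)`, where `c_k = ∫_{r>0} r^k Φ̄(r) dr`
is positive. Hence `F_P` determines all moments of `σ = 1 + x` under `P`. As `σ` is bounded,
continuous and injective, the algebra it generates separates points, so by Stone–Weierstrass
these moments determine `P`.
-/

open MeasureTheory ProbabilityTheory

/-- The standard normal CDF. -/
noncomputable def stdNormalCDF (r : ℝ) : ℝ :=
  ((gaussianReal 0 1) (Set.Iic r)).toReal

open Real Set BoundedContinuousFunction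

noncomputable def stdNormalTail (r : ℝ) : ℝ := (gaussianReal 0 1).real (Ioi r)

lemma one_sub_stdNormalCDF (r : ℝ) : 1 - stdNormalCDF r = stdNormalTail r := by
  rw [sub_eq_iff_eq_add',
    ← probReal_add_probReal_compl (μ := gaussianReal 0 1) measurableSet_Iic, compl_Iic]
  rfl

lemma monotone_stdNormalCDF : Monotone stdNormalCDF := fun _ _ h =>
  measureReal_mono (Iic_subset_Iic.2 h)

@[fun_prop]
lemma measurable_stdNormalTail : Measurable stdNormalTail :=
  Antitone.measurable fun _ _ h => measureReal_mono (Ioi_subset_Ioi h)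

lemma stdNormalTail_pos (r : ℝ) : 0 < stdNormalTail r := by
  refine ENNReal.toReal_pos (fun h => ?_) (measure_ne_top _ _)
  simpa using gaussianReal_absolutelyContinuous' 0 one_ne_zero h

/-- Chernoff bound, with the Gaussian moment generating function `exp (t ^ 2 / 2)` at `t = r`. -/
lemma stdNormalTail_le_exp {r : ℝ} (hr : 0 ≤ r) : stdNormalTail r ≤ exp (-r ^ 2 / 2) := by
  have h := measure_ge_le_exp_mul_mgf (μ := gaussianReal 0 1) (X := id) r hr
    (integrable_exp_mul_gaussianReal r)
  rw [mgf_id_gaussianReal] at h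
  calc stdNormalTail r ≤ (gaussianReal 0 1).real {x | r ≤ id x} :=
        measureReal_mono fun x hx => le_of_lt (α := ℝ) hx
    _ ≤ exp (-r ^ 2 / 2) := h.trans_eq (by rw [← exp_add]; congr 1; push_cast; ring)

lemma integrableOn_pow_mul_stdNormalTail_div (k : ℕ) {s : ℝ} (hs : 0 < s) :
    IntegrableOn (fun r => r ^ k * stdNormalTail (r / s)) (Ioi 0) := by
  have hdom : IntegrableOn (fun r : ℝ => r ^ k * exp (-(1 / (2 * s ^ 2)) * r ^ 2)) (Ioi 0) := by
    simpa only [rpow_natCast] using (integrable_rpow_mul_exp_neg_mul_sq (b := 1 / (2 * s ^ 2))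
      (by positivity) (s := k) (by linarith [k.cast_nonneg (α := ℝ)])).integrableOn
  refine hdom.mono' (by fun_prop) ?_
  filter_upwards [ae_restrict_mem measurableSet_Ioi] with r (hr : 0 < r)
  rw [norm_of_nonneg (by have := stdNormalTail_pos (r / s); positivity)]
  gcongr
  refine (stdNormalTail_le_exp (by positivity)).trans_eq ?_
  congr 1
  field_simp

noncomputable def stdNormalTailMoment (k : ℕ) : ℝ := ∫ r in Ioi 0, r ^ k * stdNormalTail r

lemma stdNormalTailMoment_pos (k : ℕ) : 0 < stdNormalTailMoment k := by
  have hint := integrableOn_pow_mul_stdNormalTail_div k one_pos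
  simp only [div_one] at hint
  refine (setIntegral_pos_iff_support_of_nonneg_ae ?_ hint).2 ?_
  · filter_upwards [ae_restrict_mem measurableSet_Ioi] with r (hr : 0 < r)
    have := stdNormalTail_pos r
    positivity
  · have : Ioi (0 : ℝ) ⊆ Function.support (fun r : ℝ => r ^ k * stdNormalTail r) ∩ Ioi 0 :=
      fun r (hr : 0 < r) => ⟨(mul_pos (pow_pos hr k) (stdNormalTail_pos r)).ne', hr⟩
    exact (by simp : (0 : ENNReal) < volume (Ioi (0 : ℝ))).trans_le (measure_mono this)

lemma integral_pow_mul_stdNormalTail_div (k : ℕ) {s : ℝ} (hs : 0 < s) :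
    ∫ r in Ioi 0, r ^ k * stdNormalTail (r / s) = s ^ (k + 1) * stdNormalTailMoment k := by
  have h := integral_comp_mul_right_Ioi (fun u => u ^ k * stdNormalTail u) 0 (inv_pos.2 hs)
  simp only [zero_mul, inv_inv, smul_eq_mul] at h
  calc ∫ r in Ioi 0, r ^ k * stdNormalTail (r / s)
      = ∫ r in Ioi 0, s ^ k * ((r * s⁻¹) ^ k * stdNormalTail (r * s⁻¹)) := by
        refine setIntegral_congr_fun measurableSet_Ioi fun r _ => ?_
        rw [mul_pow, inv_pow, div_eq_mul_inv]
        field_simp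
    _ = s ^ (k + 1) * stdNormalTailMoment k := by
        rw [integral_const_mul, h, stdNormalTailMoment, pow_succ, mul_assoc]

section Mixture

variable {α : Type*} [MeasurableSpace α] {s : α → ℝ}

lemma integral_pow_mul_integral_stdNormalTail_div (P : Measure α) [SFinite P] (hs : Measurable s)
    (hs_pos : ∀ x, 0 < s x) {k : ℕ} (hs_int : Integrable (fun x => s x ^ (k + 1)) P) :
    ∫ r in Ioi 0, r ^ k * ∫ x, stdNormalTail (r / s x) ∂P
      = stdNormalTailMoment k * ∫ x, s x ^ (k + 1) ∂P := by
  have hinner (x : α) : ∫ r in Ioi 0, r ^ k * stdNormalTail (r / s x)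
      = stdNormalTailMoment k * s x ^ (k + 1) := by
    rw [integral_pow_mul_stdNormalTail_div k (hs_pos x), mul_comm]
  have hint : Integrable (Function.uncurry fun x r => r ^ k * stdNormalTail (r / s x))
      (P.prod (volume.restrict (Ioi 0))) := by
    have hmeas : Measurable (Function.uncurry fun x r => r ^ k * stdNormalTail (r / s x)) :=
      (measurable_snd.pow_const k).mul
        (measurable_stdNormalTail.comp (measurable_snd.div (hs.comp measurable_fst)))
    refine (integrable_prod_iff hmeas.aestronglyMeasurable).2 ⟨.of_forall fun x => ?_, ?_⟩
    · exact (integrableOn_pow_mul_stdNormalTail_div k (hs_pos x) :)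
    · refine (hs_int.const_mul (stdNormalTailMoment k)).congr (.of_forall fun x => ?_)
      dsimp only [Function.uncurry_apply_pair]
      rw [← hinner]
      refine setIntegral_congr_fun measurableSet_Ioi fun r (hr : 0 < r) => ?_
      have := stdNormalTail_pos (r / s x)
      exact (norm_of_nonneg (by positivity)).symm
  calc ∫ r in Ioi 0, r ^ k * ∫ x, stdNormalTail (r / s x) ∂P
      = ∫ r in Ioi 0, ∫ x, r ^ k * stdNormalTail (r / s x) ∂P := by
        simp only [integral_const_mul]
    _ = ∫ x, (∫ r in Ioi 0, r ^ k * stdNormalTail (r / s x)) ∂P :=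
        (integral_integral_swap hint).symm
    _ = stdNormalTailMoment k * ∫ x, s x ^ (k + 1) ∂P := by
        simp only [hinner, integral_const_mul]

lemma integral_stdNormalTail_comp (P : Measure α) [IsProbabilityMeasure P] {g : α → ℝ}
    (hg : Measurable g) : ∫ x, stdNormalTail (g x) ∂P = 1 - ∫ x, stdNormalCDF (g x) ∂P := by
  have hint : Integrable (fun x => stdNormalCDF (g x)) P :=
    .of_bound (monotone_stdNormalCDF.measurable.comp hg).aestronglyMeasurable 1
      (.of_forall fun x => (norm_of_nonneg measureReal_nonneg).trans_le measureReal_le_one)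
  simp only [← one_sub_stdNormalCDF]
  rw [integral_sub (integrable_const 1) hint, integral_const, probReal_univ, one_smul]

lemma integral_pow_eq_of_integral_stdNormalCDF_div_eq {P₁ P₂ : Measure α}
    [IsProbabilityMeasure P₁] [IsProbabilityMeasure P₂] (hs : Measurable s)
    (hs_pos : ∀ x, 0 < s x) (hs_int₁ : ∀ n : ℕ, Integrable (fun x => s x ^ n) P₁)
    (hs_int₂ : ∀ n : ℕ, Integrable (fun x => s x ^ n) P₂)
    (h : ∀ r, 0 < r →
      ∫ x, stdNormalCDF (r / s x) ∂P₁ = ∫ x, stdNormalCDF (r / s x) ∂P₂) :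
    ∀ n : ℕ, ∫ x, s x ^ n ∂P₁ = ∫ x, s x ^ n ∂P₂
  | 0 => by simp
  | k + 1 => by
    refine mul_left_cancel₀ (stdNormalTailMoment_pos k).ne' ?_
    rw [← integral_pow_mul_integral_stdNormalTail_div P₁ hs hs_pos (hs_int₁ _),
      ← integral_pow_mul_integral_stdNormalTail_div P₂ hs hs_pos (hs_int₂ _)]
    refine setIntegral_congr_fun measurableSet_Ioi fun r (hr : 0 < r) => ?_
    rw [integral_stdNormalTail_comp P₁ (by fun_prop),
      integral_stdNormalTail_comp P₂ (by fun_prop), h r hr]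

end Mixture

lemma ext_of_forall_integral_pow_eq {E : Type*} [TopologicalSpace E] [PolishSpace E]
    [MeasurableSpace E] [BorelSpace E] {P P' : Measure E} [IsFiniteMeasure P] [IsFiniteMeasure P']
    {f : E →ᵇ ℝ} (hf : Function.Injective f)
    (h : ∀ n : ℕ, ∫ x, f x ^ n ∂P = ∫ x, f x ^ n ∂P') :
    P = P' := by
  refine ext_of_forall_mem_subalgebra_integral_eq_of_polish (A := StarAlgebra.adjoin ℝ {f}) ?_ ?_
  · intro x y hxy
    have hf_mem : f ∈ StarAlgebra.adjoin ℝ {f} := StarAlgebra.subset_adjoin ℝ {f} rfl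
    exact ⟨f, ⟨f.toContinuousMap, StarSubalgebra.mem_map.2 ⟨f, hf_mem, rfl⟩, rfl⟩,
      hf.ne hxy⟩
  · intro g hg
    -- the star of a real function is trivial, so `StarAlgebra.adjoin ℝ {f}` is spanned by `f ^ n`
    have hstar : star {f} = ({f} : Set (E →ᵇ ℝ)) := by
      rw [Set.star_singleton, show star f = f by ext x; exact star_trivial (f x)]
    replace hg : g ∈ Submodule.span ℝ (Submonoid.closure ({f} : Set (E →ᵇ ℝ))) := by
      rw [← Set.union_self {f}, ← hstar]
      exact (StarAlgebra.adjoin_eq_span (R := ℝ) {f}) ▸ hg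
    induction hg using Submodule.span_induction with
    | mem g hg =>
      obtain ⟨n, rfl⟩ := Submonoid.mem_closure_singleton.1 hg
      simpa using h n
    | zero => simp
    | add g₁ g₂ _ _ h₁ h₂ =>
      simp only [coe_add, Pi.add_apply]
      rw [integral_add (g₁.integrable P) (g₂.integrable P),
        integral_add (g₁.integrable P') (g₂.integrable P'), h₁, h₂]
    | smul c g _ hg =>
      simp only [coe_smul, smul_eq_mul, integral_const_mul, hg]

/-- Injectivity of the heteroskedastic scale mixture: with `σ(x) = 1 + x` on `[0,1]`,
the map `P ↦ F_P`, `F_P(r) = ∫ Φ(r/σ(x)) dP(x)`, is injective on Borel probability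
measures on `[0,1]`; consequently distinct mixing laws give different mixture CDFs. -/
theorem scale_mixture_injective
    (P₁ P₂ : Measure (Set.Icc (0 : ℝ) 1))
    [IsProbabilityMeasure P₁] [IsProbabilityMeasure P₂] :
    ((∀ r : ℝ, 0 < r →
        (∫ x, stdNormalCDF (r / (1 + (x : ℝ))) ∂P₁)
          = ∫ x, stdNormalCDF (r / (1 + (x : ℝ))) ∂P₂) → P₁ = P₂) ∧
      (P₁ ≠ P₂ → ∃ r : ℝ, 0 < r ∧
        (∫ x, stdNormalCDF (r / (1 + (x : ℝ))) ∂P₁)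
          ≠ ∫ x, stdNormalCDF (r / (1 + (x : ℝ))) ∂P₂) := by
  let σ : Icc (0 : ℝ) 1 →ᵇ ℝ := .mkOfCompact ⟨fun x => 1 + (x : ℝ), by fun_prop⟩
  have hσ_pos (x : Icc (0 : ℝ) 1) : 0 < σ x := by
    change 0 < 1 + (x : ℝ)
    linarith [x.2.1]
  have hσ_inj : Function.Injective σ := fun x y hxy => Subtype.ext (add_left_cancel hxy)
  have hσ_int (P : Measure (Icc (0 : ℝ) 1)) [IsFiniteMeasure P] (n : ℕ) :
      Integrable (fun x => σ x ^ n) P :=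
    (σ ^ n).integrable P
  have hinj (h : ∀ r : ℝ, 0 < r → ∫ x, stdNormalCDF (r / σ x) ∂P₁
      = ∫ x, stdNormalCDF (r / σ x) ∂P₂) : P₁ = P₂ :=
    ext_of_forall_integral_pow_eq hσ_inj <| integral_pow_eq_of_integral_stdNormalCDF_div_eq
      σ.continuous.measurable hσ_pos (hσ_int P₁) (hσ_int P₂) h
  exact ⟨hinj, fun hne => by by_contra! h; exact hne (hinj h)⟩
end
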